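/- Let (x_n)_{n∈ℕ} be a sequence in (ℝ^d)^{k−1} converging to some x ∈ (ℝ^d)^{k−1}. Then for every ε > 0 there exists N ∈ ℕ such that Z̃_u(x_n) ⊆ Z̃_u(x) + B̄(0, ε) for all n ≥ N, where B̄(0, ε) is the closed ball of radius ε centred at the origin and the Minkowski sum with the empty set is empty (so if Z̃_u(x) = ∅ then Z̃_u(x_n) = ∅ for all sufficiently large n). -/

import Mathlib

open Pointwise
open Filter Topology

/-- The shot noise function `f_x(y) = Σ_{i=1}^{k−1} g_i(y − x_i) + g_k(y − x_k)`,
where `k = m + 1`. -/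
noncomputable def fval (d m : ℕ) (g : Fin (m + 1) → EuclideanSpace ℝ (Fin d) → ℝ)
    (xk : EuclideanSpace ℝ (Fin d)) (v : Fin m → EuclideanSpace ℝ (Fin d))
    (y : EuclideanSpace ℝ (Fin d)) : ℝ :=
  (∑ i : Fin m, g i.castSucc (y - v i)) + g (Fin.last m) (y - xk)

/-- `K(x) = (⋂_{i=1}^{k−1} (K_i + x_i)) ∩ (K_k + x_k)`. -/
def Kx (d m : ℕ) (K : Fin (m + 1) → Set (EuclideanSpace ℝ (Fin d)))
    (xk : EuclideanSpace ℝ (Fin d)) (v : Fin m → EuclideanSpace ℝ (Fin d)) :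
    Set (EuclideanSpace ℝ (Fin d)) :=
  (⋂ i : Fin m, (· + v i) '' K i.castSucc) ∩ ((· + xk) '' K (Fin.last m))

/-- The excursion set `Z̃_u(x) = {y ∈ K(x) : f_x(y) ≥ u}`. -/
noncomputable def Zt (d m : ℕ) (g : Fin (m + 1) → EuclideanSpace ℝ (Fin d) → ℝ)
    (K : Fin (m + 1) → Set (EuclideanSpace ℝ (Fin d)))
    (xk : EuclideanSpace ℝ (Fin d)) (u : ℝ) (v : Fin m → EuclideanSpace ℝ (Fin d)) :
    Set (EuclideanSpace ℝ (Fin d)) :=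
  {y ∈ Kx d m K xk v | u ≤ fval d m g xk v y}


lemma usc_aux {E : Type*} [TopologicalSpace E] {K : Set E} {g : E → ℝ}
    (hcl : IsClosed K) (h0 : ∀ z, 0 ≤ g z) (hs : ∀ z ∉ K, g z = 0)
    (hc : ContinuousOn g K) : UpperSemicontinuous g := by
  intro z c hzc
  by_cases hz : z ∈ K
  · have h1 : ∀ᶠ w in 𝓝[K] z, g w < c := (hc z hz).eventually_lt_const hzc
    have h2 : ∀ᶠ w in 𝓝[Kᶜ] z, g w < c :=
      eventually_of_mem self_mem_nhdsWithin fun w hw => by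
        rw [hs w hw]; linarith [h0 z]
    have h3 : ∀ᶠ w in 𝓝[K] z ⊔ 𝓝[Kᶜ] z, g w < c := eventually_sup.mpr ⟨h1, h2⟩
    rwa [← nhdsWithin_union, Set.union_compl_self, nhdsWithin_univ] at h3
  · have h0c : 0 < c := by rw [hs z hz] at hzc; exact hzc
    filter_upwards [hcl.isOpen_compl.mem_nhds hz] with w hw
    rw [hs w hw]; exact h0c

/-- if `x_n → x` in `(ℝ^d)^{k−1}`, then for every `ε > 0` one has
`Z̃_u(x_n) ⊆ Z̃_u(x) + B̄(0,ε)` for all large `n` (Minkowski sum with `∅` is `∅`).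
Here `k = m + 1 ≥ 2`, each `g_i` is strictly concave on `K_i` and
`g_i ≤ u/(k−1) = u/m` everywhere. -/
theorem stmt8 (d m : ℕ) (hd : 1 ≤ d) (hm : 1 ≤ m) (u : ℝ) (hu : 0 < u)
    (g : Fin (m + 1) → EuclideanSpace ℝ (Fin d) → ℝ)
    (K : Fin (m + 1) → Set (EuclideanSpace ℝ (Fin d)))
    (hKne : ∀ i, (K i).Nonempty)
    (hKcpt : ∀ i, IsCompact (K i))
    (hKconv : ∀ i, Convex ℝ (K i))
    (hg0 : ∀ i z, 0 ≤ g i z)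
    (hgsupp : ∀ i, ∀ z ∉ K i, g i z = 0)
    (hgconc : ∀ i, StrictConcaveOn ℝ (K i) (g i))
    (hgcont : ∀ i, ContinuousOn (g i) (K i))
    (hgle : ∀ i z, g i z ≤ u / m)
    (xk : EuclideanSpace ℝ (Fin d))
    (xs : ℕ → Fin m → EuclideanSpace ℝ (Fin d))
    (x : Fin m → EuclideanSpace ℝ (Fin d))
    (hconv : Filter.Tendsto xs Filter.atTop (nhds x))
    (ε : ℝ) (hε : 0 < ε) :
    ∃ N : ℕ, ∀ n ≥ N,
      Zt d m g K xk u (xs n) ⊆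
        Zt d m g K xk u x + Metric.closedBall (0 : EuclideanSpace ℝ (Fin d)) ε := by
  by_contra hcon
  push_neg at hcon
  -- hcon : ∀ N, ∃ n ≥ N, ¬ subset
  have hfreq : ∃ᶠ n in atTop, ¬ Zt d m g K xk u (xs n) ⊆
      Zt d m g K xk u x + Metric.closedBall (0 : EuclideanSpace ℝ (Fin d)) ε :=
    frequently_atTop.mpr hcon
  obtain ⟨φ, hφ, hPφ⟩ := extraction_of_frequently_atTop hfreq
  choose y hy1 hy2 using fun j => Set.not_subset.mp (hPφ j)
  -- y j lies in the fixed compact set K_last + xk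
  have hcpt : IsCompact ((· + xk) '' K (Fin.last m)) :=
    (hKcpt (Fin.last m)).image (continuous_id.add continuous_const)
  have hymem : ∀ j, y j ∈ (· + xk) '' K (Fin.last m) := fun j => (hy1 j).1.2
  obtain ⟨yL, hyL, ψ, hψ, hyψ⟩ := hcpt.tendsto_subseq hymem
  -- convergence of the chosen subsequence of centers
  have hφψ : StrictMono (φ ∘ ψ) := hφ.comp hψ
  have hxsψ : Tendsto (fun j => xs (φ (ψ j))) atTop (𝓝 x) :=
    hconv.comp hφψ.tendsto_atTop
  -- yL ∈ Kx x
  have hKxmem : yL ∈ Kx d m K xk x := by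
    constructor
    · rw [Set.mem_iInter]
      intro i
      have hmemK : ∀ j, y (ψ j) - xs (φ (ψ j)) i ∈ K i.castSucc := by
        intro j
        have := (hy1 (ψ j)).1.1
        rw [Set.mem_iInter] at this
        obtain ⟨a, ha, hae⟩ := this i
        have : y (ψ j) - xs (φ (ψ j)) i = a := by rw [← hae]; module
        rwa [this]
      have htend : Tendsto (fun j => y (ψ j) - xs (φ (ψ j)) i) atTop
          (𝓝 (yL - x i)) := by
        refine Tendsto.sub hyψ ?_
        exact ((continuous_apply i).tendsto x).comp hxsψ
      have hmem : yL - x i ∈ K i.castSucc :=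
        (hKcpt i.castSucc).isClosed.mem_of_tendsto htend
          (Eventually.of_forall hmemK)
      exact ⟨yL - x i, hmem, by module⟩
    · exact hyL
  -- upper semicontinuity of the joint shot-noise function
  set F : ((Fin m → EuclideanSpace ℝ (Fin d)) × EuclideanSpace ℝ (Fin d)) → ℝ :=
    fun p => fval d m g xk p.1 p.2 with hFdef
  have husc : ∀ i, UpperSemicontinuous (g i) := fun i =>
    usc_aux (hKcpt i).isClosed (hg0 i) (hgsupp i) (hgcont i)
  have hFusc : UpperSemicontinuous F := by
    have h1 : UpperSemicontinuous fun p :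
        ((Fin m → EuclideanSpace ℝ (Fin d)) × EuclideanSpace ℝ (Fin d)) =>
        ∑ i : Fin m, g i.castSucc (p.2 - p.1 i) := by
      apply upperSemicontinuous_sum
      intro i _
      exact UpperSemicontinuous.comp (husc i.castSucc)
        (continuous_snd.sub ((continuous_apply i).comp continuous_fst))
    have h2 : UpperSemicontinuous fun p :
        ((Fin m → EuclideanSpace ℝ (Fin d)) × EuclideanSpace ℝ (Fin d)) =>
        g (Fin.last m) (p.2 - xk) :=
      UpperSemicontinuous.comp (husc (Fin.last m)) (continuous_snd.sub continuous_const)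
    exact h1.add h2
  -- u ≤ fval at the limit
  have hfge : u ≤ fval d m g xk x yL := by
    by_contra hlt
    push_neg at hlt
    have hp : Tendsto (fun j => ((fun j => xs (φ (ψ j))) j, y (ψ j))) atTop
        (𝓝 (x, yL)) := hxsψ.prodMk_nhds hyψ
    have := (hp.eventually (hFusc (x, yL) u hlt)).exists
    obtain ⟨j, hj⟩ := this
    exact absurd (hy1 (ψ j)).2 (not_le.mpr hj)
  have hZmem : yL ∈ Zt d m g K xk u x := ⟨hKxmem, hfge⟩
  -- eventually y (ψ j) is within ε of yL, contradiction
  have hev : ∀ᶠ j in atTop, (y ∘ ψ) j ∈ Metric.closedBall yL ε :=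
    hyψ.eventually (Metric.closedBall_mem_nhds yL hε)
  obtain ⟨j, hj⟩ := hev.exists
  apply hy2 (ψ j)
  refine ⟨yL, hZmem, y (ψ j) - yL, ?_, by module⟩
  rw [mem_closedBall_zero_iff]
  simpa [dist_eq_norm] using hj
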